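/- Let n ≥ 2, let A0 ∈ ℝ^{n×n}, E0 ∈ ℝ^{n×1}, C0 ∈ ℝ^{1×n}. Assume (A0, C0) is observable and that for every z ∈ ℂ the matrix [[A0 − z·I_n, E0], [C0, 0]] has rank n+1. Then C0·E0 = 0 and E0 ≠ 0; in particular rank(C0·E0) = 0 < 1 = rank(E0), so the classical necessary condition rank(C0·E0) = rank(E0) for the existence of an undelayed full-order unknown input observer fails for this system. -/
import Mathlib


open Matrix


open Matrix Polynomial

lemma det_ne_zero_of_rank_eq_card {K : Type*} [Field K] {ι : Type*} [Fintype ι] [DecidableEq ι]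
    {M : Matrix ι ι K} (h : M.rank = Fintype.card ι) : M.det ≠ 0 := by
  intro hdet
  obtain ⟨v, hv, hMv⟩ := (Matrix.exists_mulVec_eq_zero_iff).mpr hdet
  have hrange : LinearMap.range M.mulVecLin = ⊤ := by
    apply Submodule.eq_top_of_finrank_eq
    rw [Module.finrank_fintype_fun_eq_card]; exact h
  have hinj : Function.Injective M.mulVecLin :=
    LinearMap.injective_iff_surjective.mpr (LinearMap.range_eq_top.mp hrange)
  exact hv (hinj (show M.mulVecLin v = M.mulVecLin 0 by
    simp [Matrix.mulVecLin_apply, hMv]))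

lemma adj_charmatrix_coeff {n : ℕ} (hn : 1 ≤ n) (A : Matrix (Fin n) (Fin n) ℂ) (i j : Fin n) :
    ((adjugate (charmatrix A)) i j).coeff (n - 1) = (1 : Matrix (Fin n) (Fin n) ℂ) i j := by
  set q : Polynomial (Matrix (Fin n) (Fin n) ℂ) := matPolyEquiv (adjugate (charmatrix A)) with hq
  have hmul : (X - C A) * q
      = (Matrix.charpoly A).map (algebraMap ℂ (Matrix (Fin n) (Fin n) ℂ)) := by
    have h1 := Matrix.mul_adjugate (charmatrix A)
    calc (X - C A) * q = matPolyEquiv (charmatrix A) * q := by rw [matPolyEquiv_charmatrix]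
      _ = matPolyEquiv (charmatrix A * adjugate (charmatrix A)) :=
          (_root_.map_mul matPolyEquiv _ _).symm
      _ = matPolyEquiv ((Matrix.charpoly A) • (1 : Matrix (Fin n) (Fin n) ℂ[X])) := by
          rw [h1]; rfl
      _ = _ := matPolyEquiv_smul_one _
  have hdegc : (Matrix.charpoly A).natDegree = n := by
    simpa using Matrix.charpoly_natDegree_eq_dim A
  have hstep : ∀ k, n ≤ k → q.coeff k = A * q.coeff (k + 1) := by
    intro k hk
    have := congrArg (fun r => r.coeff (k + 1)) hmul
    simp only [sub_mul, coeff_sub, coeff_X_mul, coeff_C_mul, coeff_map] at this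
    rw [Polynomial.coeff_eq_zero_of_natDegree_lt (by omega : (Matrix.charpoly A).natDegree < k + 1)] at this
    simp only [map_zero] at this
    -- this : q.coeff k - A * q.coeff (k+1) = 0
    linear_combination (norm := noncomm_ring) this
  have hpow : ∀ m k, n ≤ k → q.coeff k = A ^ m * q.coeff (k + m) := by
    intro m
    induction m with
    | zero => intro k hk; simp
    | succ m ih =>
      intro k hk
      rw [hstep k hk, ih (k + 1) (by omega), ← mul_assoc, ← pow_succ',
        show k + 1 + m = k + (m + 1) by omega]
  have hq0 : ∀ k, n ≤ k → q.coeff k = 0 := by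
    intro k hk
    rw [hpow (q.natDegree + 1) k hk,
      Polynomial.coeff_eq_zero_of_natDegree_lt (by omega), mul_zero]
  have hn' : n - 1 + 1 = n := by omega
  have hc1 : (Matrix.charpoly A).coeff n = 1 := by
    have h := (Matrix.charpoly_monic A).coeff_natDegree
    rwa [hdegc] at h
  have hcoeffn := congrArg (fun r => r.coeff (n - 1 + 1)) hmul
  simp only [sub_mul, coeff_sub, coeff_C_mul, coeff_map, coeff_X_mul] at hcoeffn
  rw [hq0 (n - 1 + 1) (by omega), mul_zero, sub_zero,
    show n - 1 + 1 = n from hn', hc1, _root_.map_one] at hcoeffn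
  calc ((adjugate (charmatrix A)) i j).coeff (n - 1)
      = (matPolyEquiv (adjugate (charmatrix A))).coeff (n - 1) i j :=
        (matPolyEquiv_coeff_apply _ _ _ _).symm
    _ = (1 : Matrix (Fin n) (Fin n) ℂ) i j := by rw [← hq, hcoeffn]

/-- The observability matrix of the pair `(M, c)`: rows `c, c*M, …, c*M^(m-1)`. -/
noncomputable def obsMat {m : ℕ} (M : Matrix (Fin m) (Fin m) ℝ)
    (c : Matrix (Fin 1) (Fin m) ℝ) : Matrix (Fin m) (Fin m) ℝ :=
  Matrix.of fun i j => (c * M ^ (i : ℕ)) 0 j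

/-- The Rosenbrock system matrix `[[A0 - z I, E0], [C0, 0]]` with entries coerced to `ℂ`. -/
noncomputable def rosenbrock (n : ℕ) (A0 : Matrix (Fin n) (Fin n) ℝ)
    (E0 : Matrix (Fin n) (Fin 1) ℝ) (C0 : Matrix (Fin 1) (Fin n) ℝ) (z : ℂ) :
    Matrix (Fin n ⊕ Fin 1) (Fin n ⊕ Fin 1) ℂ :=
  Matrix.fromBlocks (A0.map Complex.ofReal - z • 1) (E0.map Complex.ofReal)
    (C0.map Complex.ofReal) 0

theorem stmt15 (n : ℕ) (hn : 2 ≤ n)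
    (A0 : Matrix (Fin n) (Fin n) ℝ) (E0 : Matrix (Fin n) (Fin 1) ℝ)
    (C0 : Matrix (Fin 1) (Fin n) ℝ)
    (hobs : IsUnit (obsMat A0 C0).det)
    (hrank : ∀ z : ℂ, (rosenbrock n A0 E0 C0 z).rank = n + 1) :
    (C0 * E0) 0 0 = 0 ∧ E0 ≠ 0
    ∧ (C0 * E0).rank = 0 ∧ E0.rank = 1 ∧ (C0 * E0).rank < E0.rank := by
  classical
  have hdet : ∀ z : ℂ, (rosenbrock n A0 E0 C0 z).det ≠ 0 := by
    intro z
    apply det_ne_zero_of_rank_eq_card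
    rw [hrank z]; simp
  have hE0 : E0 ≠ 0 := by
    intro h
    refine hdet 0 (Matrix.det_eq_zero_of_column_eq_zero (Sum.inr 0) ?_)
    intro i; rcases i with i | i <;> simp [rosenbrock, h]
  set Aℂ : Matrix (Fin n) (Fin n) ℂ := A0.map Complex.ofReal with hAC
  set EX : Matrix (Fin n) (Fin 1) ℂ[X] := (E0.map Complex.ofReal).map Polynomial.C with hEX
  set CX : Matrix (Fin 1) (Fin n) ℂ[X] := (C0.map Complex.ofReal).map Polynomial.C with hCX
  set MX : Matrix (Fin n) (Fin n) ℂ[X] := -(charmatrix Aℂ) with hMX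
  set p : ℂ[X] := (Matrix.fromBlocks MX EX CX 0).det with hp
  have heval : ∀ z : ℂ, p.eval z = (rosenbrock n A0 E0 C0 z).det := by
    intro z
    have h1 : p.eval z = (Polynomial.evalRingHom z) p := rfl
    rw [h1, hp, RingHom.map_det]
    congr 1
    rw [RingHom.mapMatrix_apply]
    ext i j
    rcases i with i | i <;> rcases j with j | j <;>
      simp [rosenbrock, hMX, hEX, hCX, hAC, Matrix.map_apply, charmatrix_apply,
        Matrix.sub_apply, Matrix.smul_apply, Matrix.one_apply, Matrix.diagonal_apply,
        apply_ite (Polynomial.eval z)] <;>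
      split_ifs <;> ring
  have hpne : p ≠ 0 := by
    intro h
    exact hdet 0 (by rw [← heval 0, h, Polynomial.eval_zero])
  have hcoeff0 : p.coeff (n - 1) = 0 := by
    have hdeg : p.natDegree = 0 := by
      by_contra h
      obtain ⟨z, hz⟩ := Complex.exists_root
        (Polynomial.natDegree_pos_iff_degree_pos.mp (Nat.pos_of_ne_zero h))
      exact hdet z (by rw [← heval z]; exact hz)
    exact Polynomial.coeff_eq_zero_of_natDegree_lt (by omega)
  have hdetMX : MX.det ≠ 0 := by
    rw [hMX, Matrix.det_neg]
    refine mul_ne_zero (pow_ne_zero _ (neg_ne_zero.mpr one_ne_zero)) ?_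
    have := (Matrix.charpoly_monic Aℂ).ne_zero
    simpa [Matrix.charpoly] using this
  have hkey : p = -((CX * adjugate MX * EX) 0 0) := by
    set F := FractionRing ℂ[X]
    set φ : ℂ[X] →+* F := algebraMap ℂ[X] F with hφdef
    have hφ : Function.Injective φ := IsFractionRing.injective _ _
    apply hφ
    have hdet' : ((MX.map φ).det) ≠ 0 := by
      rw [← RingHom.mapMatrix_apply, ← RingHom.map_det]
      intro h
      exact hdetMX (hφ (by rw [h, map_zero]))
    haveI : Invertible (MX.map φ) := Matrix.invertibleOfIsUnitDet _ (Ne.isUnit hdet')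
    calc φ p
        = ((Matrix.fromBlocks MX EX CX 0).map φ).det := by
          rw [hp, RingHom.map_det, RingHom.mapMatrix_apply]
      _ = (Matrix.fromBlocks (MX.map φ) (EX.map φ) (CX.map φ) 0).det := by
          rw [Matrix.fromBlocks_map, Matrix.map_zero _ (map_zero φ)]
      _ = (MX.map φ).det
            * ((0 : Matrix (Fin 1) (Fin 1) F) - CX.map φ * ⅟(MX.map φ) * EX.map φ).det :=
          Matrix.det_fromBlocks₁₁ _ _ _ _
      _ = -(((CX.map φ) * ((MX.map φ).det • ⅟(MX.map φ)) * (EX.map φ)) 0 0) := by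
          rw [Matrix.det_fin_one]
          simp only [Matrix.sub_apply, Matrix.zero_apply, Matrix.mul_smul, Matrix.smul_mul,
            Matrix.smul_apply, smul_eq_mul]
          ring
      _ = -(((CX.map φ) * adjugate (MX.map φ) * (EX.map φ)) 0 0) := by
          rw [invOf_eq_nonsing_inv, Matrix.inv_def, smul_smul,
            Ring.mul_inverse_cancel _ (Ne.isUnit hdet'), one_smul]
      _ = φ (-((CX * adjugate MX * EX) 0 0)) := by
          have hadjmap : adjugate (MX.map φ) = (adjugate MX).map φ := by
            rw [← RingHom.mapMatrix_apply, ← RingHom.map_adjugate, RingHom.mapMatrix_apply]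
          rw [hadjmap, ← Matrix.map_mul, ← Matrix.map_mul, map_neg, Matrix.map_apply]
  have hadj : ∀ (i : Fin n) (j : Fin n), ((adjugate MX) i j).coeff (n - 1)
      = (-1 : ℂ) ^ (n - 1) * (if i = j then 1 else 0) := by
    intro i j
    have h1 : MX = (-1 : ℂ[X]) • charmatrix Aℂ := by rw [hMX, neg_one_smul]
    rw [h1, Matrix.adjugate_smul, Matrix.smul_apply, smul_eq_mul]
    have h2 : ((-1 : ℂ[X]) ^ (Fintype.card (Fin n) - 1)) = Polynomial.C ((-1 : ℂ) ^ (n - 1)) := by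
      simp
    rw [h2, Polynomial.coeff_C_mul, adj_charmatrix_coeff (by omega) Aℂ i j, Matrix.one_apply]
  have hsum : ((CX * adjugate MX * EX) 0 0).coeff (n - 1)
      = (-1 : ℂ) ^ (n - 1) * (((C0 * E0) 0 0 : ℝ) : ℂ) := by
    have hent : (CX * adjugate MX * EX) 0 0
        = ∑ j, (∑ i, CX 0 i * (adjugate MX) i j) * EX j 0 := by
      simp [Matrix.mul_apply]
    have hterm : ∀ j i : Fin n, (CX 0 i * (adjugate MX) i j * EX j 0).coeff (n - 1)
        = ((C0 0 i : ℝ) : ℂ) * ((-1 : ℂ) ^ (n - 1) * (if i = j then 1 else 0))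
          * ((E0 j 0 : ℝ) : ℂ) := by
      intro j i
      rw [hCX, hEX]
      simp only [Matrix.map_apply]
      rw [Polynomial.coeff_mul_C, Polynomial.coeff_C_mul, hadj]
    rw [hent]
    simp only [Finset.sum_mul, Polynomial.finset_sum_coeff, hterm]
    have hcast : (((C0 * E0) 0 0 : ℝ) : ℂ) = ∑ j : Fin n, ((C0 0 j : ℝ) : ℂ) * ((E0 j 0 : ℝ) : ℂ) := by
      rw [Matrix.mul_apply]
      push_cast
      rfl
    rw [hcast, Finset.mul_sum]
    apply Finset.sum_congr rfl
    intro j _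
    rw [Finset.sum_eq_single j]
    · simp; ring
    · intro i _ hij; simp [hij]
    · intro h; exact absurd (Finset.mem_univ j) h
  have hCE : (C0 * E0) 0 0 = 0 := by
    have h0 := congrArg (fun q : ℂ[X] => q.coeff (n - 1)) hkey
    simp only [hcoeff0, Polynomial.coeff_neg] at h0
    rw [hsum] at h0
    have hpow : ((-1 : ℂ) ^ (n - 1)) ≠ 0 := pow_ne_zero _ (by norm_num)
    have h1 : (((C0 * E0) 0 0 : ℝ) : ℂ) = 0 :=
      (mul_eq_zero.mp (neg_eq_zero.mp h0.symm)).resolve_left hpow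
    exact_mod_cast h1
  have hCE0 : C0 * E0 = 0 := by
    ext i j
    rw [Matrix.zero_apply, Subsingleton.elim i 0, Subsingleton.elim j 0]
    exact hCE
  have hrank0 : (C0 * E0).rank = 0 := by rw [hCE0]; exact Matrix.rank_zero
  have hrank1 : E0.rank = 1 := by
    refine le_antisymm ?_ ?_
    · simpa using E0.rank_le_card_width
    · rcases Nat.eq_zero_or_pos E0.rank with h | h
      · exfalso
        apply hE0
        have h' : Module.finrank ℝ (LinearMap.range E0.mulVecLin) = 0 := h
        have hbot : LinearMap.range E0.mulVecLin = ⊥ := Submodule.finrank_eq_zero.mp h'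
        have hz : E0.mulVecLin = 0 := LinearMap.range_eq_bot.mp hbot
        ext i j
        have h2 : E0 *ᵥ (fun _ => (1 : ℝ)) = 0 := by
          rw [← Matrix.mulVecLin_apply, hz]; rfl
        have h3 := congrFun h2 i
        simpa [Matrix.mulVec, dotProduct, Subsingleton.elim j 0] using h3
      · exact h
  exact ⟨hCE, hE0, hrank0, hrank1, by omega⟩
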